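/- Upper bound on the Hessian of the loss (Lemma C.2): Let c_α > 0. Under activation assumption (i) and with training data satisfying ‖x_i‖₂ = ‖y_i‖₂ = 1 for all i, for all L sufficiently large (depending only on c_α and d) and all weights α with ‖α‖_{F,∞} ≤ c_α L^{-1/2}, the Hessian of J_L (viewed as a symmetric bilinear form on ℝ^{L·d·d}) satisfies ‖∇²_α J_L(α)‖₂ ≤ 5 d e^{4.3 c_α}, where ‖·‖₂ is the operator (spectral) norm. -/

import Mathlib

/-!
Along a line `t ↦ α + t • w`, the hidden states `h_k`, their directional derivatives
`∂_v h_k` and the mixed second derivatives `∂_w ∂_v h_k` all satisfy residual recursions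
`S_{k+1} = S_k + L^{-1/2} r_k` with `‖r_k‖ ≤ c_α L^{-1/2} ‖S_k‖ + G_k`. The discrete Grönwall
inequality with factor `(1 + c_α / L)^L ≤ e^{c_α}` gives `‖h_k‖ ≤ e^{c_α}`,
`‖∂_v h_k‖ ≤ e^{2 c_α} ‖v‖` and `‖∂_w ∂_v h_L‖ ≤ (2 e^{3 c_α} + O(L^{-1/2})) ‖v‖ ‖w‖`;
Cauchy–Schwarz over the layers is what turns `∑_k ‖v_k‖_F` into `√L ‖v‖`. The Hessian is the
sample average of `⟨∂_w h_L, ∂_v h_L⟩ + ⟨h_L - y, ∂_w ∂_v h_L⟩`, hence bounded by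
`(e^{4 c_α} + (e^{c_α} + 1) 2 e^{3 c_α} + O(L^{-1/2})) ‖v‖ ‖w‖ ≤ 5 e^{4.3 c_α} ‖v‖ ‖w‖`
once `L` is large.
-/

open Finset

noncomputable section

/-- Euclidean norm of a vector in `ℝ^d`. -/
def vnorm {d : ℕ} (v : Fin d → ℝ) : ℝ := Real.sqrt (∑ i, v i ^ 2)

/-- Frobenius norm of a `d × d` real matrix. -/
def frobNorm {d : ℕ} (A : Fin d → Fin d → ℝ) : ℝ := Real.sqrt (∑ i, ∑ j, A i j ^ 2)

/-- Matrix-vector product. -/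
def mulVec' {d : ℕ} (A : Fin d → Fin d → ℝ) (v : Fin d → ℝ) : Fin d → ℝ :=
  fun i => ∑ j, A i j * v j

/-- Matrix-matrix product. -/
def matMul' {d : ℕ} (A B : Fin d → Fin d → ℝ) : Fin d → Fin d → ℝ :=
  fun i j => ∑ l, A i l * B l j

/-- Hidden states of the residual network: `h_0 = x` and
`h_{k+1} = h_k + L^{-1/2} σ_d(α_{k+1} h_k)`, where the weight of the (1-based)
layer `k+1` is stored at the (0-based) index `k`. -/
def hiddenState {d L : ℕ} (σ : ℝ → ℝ) (α : Fin L → Fin d → Fin d → ℝ) (x : Fin d → ℝ) :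
    ℕ → Fin d → ℝ
  | 0 => x
  | k + 1 =>
      if h : k < L then
        fun i => hiddenState σ α x k i + (Real.sqrt L)⁻¹ * σ (mulVec' (α ⟨k, h⟩) (hiddenState σ α x k) i)
      else hiddenState σ α x k

/-- One factor `I_d + L^{-1/2} diag(σ'(α_{k+1} h_k)) α_{k+1}` of the layer-to-output
Jacobian (0-based index `k`). -/
def layerJac {d L : ℕ} (σ : ℝ → ℝ) (α : Fin L → Fin d → Fin d → ℝ) (x : Fin d → ℝ)
    (k : ℕ) (h : k < L) : Fin d → Fin d → ℝ :=
  fun i i' => (if i = i' then (1 : ℝ) else 0) +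
    (Real.sqrt L)⁻¹ * deriv σ (mulVec' (α ⟨k, h⟩) (hiddenState σ α x k) i) * α ⟨k, h⟩ i i'

/-- Layer-to-output Jacobian `M_k^x(α) = ∂h_L/∂h_k`, where `k` is the 1-based
paper index, `0 ≤ k ≤ L`. -/
def jacM {d L : ℕ} (σ : ℝ → ℝ) (α : Fin L → Fin d → Fin d → ℝ) (x : Fin d → ℝ) :
    ℕ → Fin d → Fin d → ℝ
  | k =>
      if h : k < L then matMul' (jacM σ α x (k + 1)) (layerJac σ α x k h)
      else fun i i' => if i = i' then 1 else 0
  termination_by k => L - k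
  decreasing_by omega

/-- Mean-squared training loss `J_L`. -/
def loss {d L N : ℕ} (σ : ℝ → ℝ) (x y : Fin N → Fin d → ℝ)
    (α : Fin L → Fin d → Fin d → ℝ) : ℝ :=
  (1 / (2 * N)) * ∑ i, ∑ j, (y i j - hiddenState σ α (x i) L j) ^ 2

/-- Partial derivative of the loss with respect to the `(m,n)` entry of the
`k`-th weight matrix. -/
def gradEntry {d L N : ℕ} (σ : ℝ → ℝ) (x y : Fin N → Fin d → ℝ)
    (α : Fin L → Fin d → Fin d → ℝ) (k : Fin L) (m n : Fin d) : ℝ :=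
  fderiv ℝ (loss σ x y) α (Pi.single k (Pi.single m (Pi.single n 1)))

/-- `G_k^{x,y}(α) = (M_k^x(α))ᵀ (ŷ(x,α) − y)`; `k` is the 1-based paper index. -/
def Gvec {d L : ℕ} (σ : ℝ → ℝ) (α : Fin L → Fin d → Fin d → ℝ) (x y : Fin d → ℝ)
    (k : ℕ) : Fin d → ℝ :=
  fun n => ∑ j, jacM σ α x k j n * (hiddenState σ α x L j - y j)

/-- Assumption (i) on the activation function: `σ ∈ C²`, `σ'(0) = 1`, and
`|σ(z)| ≤ |z|`, `|σ'(z)| ≤ 1`, `|σ''(z)| ≤ 1` for all `z`. -/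
def ActAssump (σ : ℝ → ℝ) : Prop :=
  ContDiff ℝ 2 σ ∧ deriv σ 0 = 1 ∧
    ∀ z : ℝ, |σ z| ≤ |z| ∧ |deriv σ z| ≤ 1 ∧ |deriv (deriv σ) z| ≤ 1

section EuclideanNorm

variable {d : ℕ}

lemma vnorm_eq_norm (v : Fin d → ℝ) :
    vnorm v = ‖(WithLp.toLp 2 v : EuclideanSpace ℝ (Fin d))‖ := by
  simp [vnorm, EuclideanSpace.norm_eq]

lemma vnorm_nonneg (v : Fin d → ℝ) : 0 ≤ vnorm v := Real.sqrt_nonneg _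

lemma frobNorm_nonneg (A : Fin d → Fin d → ℝ) : 0 ≤ frobNorm A := Real.sqrt_nonneg _

lemma vnorm_add_le (a b : Fin d → ℝ) : vnorm (fun i => a i + b i) ≤ vnorm a + vnorm b := by
  simp only [vnorm_eq_norm]
  exact norm_add_le (WithLp.toLp 2 a) (WithLp.toLp 2 b)

lemma vnorm_sub_le (a b : Fin d → ℝ) : vnorm (fun i => a i - b i) ≤ vnorm a + vnorm b := by
  simp only [vnorm_eq_norm]
  exact norm_sub_le (WithLp.toLp 2 a) (WithLp.toLp 2 b)

lemma vnorm_const_mul (c : ℝ) (a : Fin d → ℝ) : vnorm (fun i => c * a i) = |c| * vnorm a := by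
  simp only [vnorm_eq_norm]
  exact norm_smul c (WithLp.toLp 2 a)

lemma vnorm_le_of_abs_le {a b : Fin d → ℝ} (h : ∀ i, |a i| ≤ |b i|) : vnorm a ≤ vnorm b :=
  Real.sqrt_le_sqrt <| sum_le_sum fun i _ => sq_le_sq.mpr (h i)

lemma vnorm_abs (a : Fin d → ℝ) : vnorm (fun i => |a i|) = vnorm a := by
  simp only [vnorm, sq_abs]

lemma abs_sum_mul_le (a b : Fin d → ℝ) : |∑ i, a i * b i| ≤ vnorm a * vnorm b := by
  rw [vnorm, vnorm, ← Real.sqrt_mul (by positivity), ← Real.sqrt_sq_eq_abs]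
  exact Real.sqrt_le_sqrt (sum_mul_sq_le_sq_mul_sq univ a b)

lemma vnorm_mul_le (a b : Fin d → ℝ) : vnorm (fun i => a i * b i) ≤ vnorm a * vnorm b := by
  rw [vnorm, vnorm, vnorm, ← Real.sqrt_mul (by positivity)]
  refine Real.sqrt_le_sqrt ?_
  rw [sum_mul]
  refine sum_le_sum fun i _ => ?_
  rw [mul_pow]
  exact mul_le_mul_of_nonneg_left
    (single_le_sum (fun j _ => sq_nonneg (b j)) (mem_univ i)) (sq_nonneg _)

lemma vnorm_mulVec'_le (A : Fin d → Fin d → ℝ) (v : Fin d → ℝ) :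
    vnorm (mulVec' A v) ≤ frobNorm A * vnorm v := by
  rw [vnorm, vnorm, frobNorm, ← Real.sqrt_mul (by positivity), sum_mul]
  exact Real.sqrt_le_sqrt <| sum_le_sum fun i _ => sum_mul_sq_le_sq_mul_sq _ _ _

lemma sum_le_sqrt_card_mul_vnorm (a : Fin d → ℝ) : ∑ i, a i ≤ Real.sqrt d * vnorm a := by
  simpa [vnorm, sum_const] using
    (le_abs_self _).trans (abs_sum_mul_le (fun _ => 1) a)

lemma vnorm_mulVec'_add_mulVec'_le {A B : Fin d → Fin d → ℝ} {p q : Fin d → ℝ} {a P Q : ℝ}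
    (hA : frobNorm A ≤ a) (hp : vnorm p ≤ P) (hq : vnorm q ≤ Q) :
    vnorm (fun i => mulVec' A p i + mulVec' B q i) ≤ a * P + Q * frobNorm B :=
  (vnorm_add_le _ _).trans <| add_le_add
    ((vnorm_mulVec'_le A p).trans
      (mul_le_mul hA hp (vnorm_nonneg p) ((frobNorm_nonneg A).trans hA)))
    ((vnorm_mulVec'_le B q).trans
      ((mul_le_mul_of_nonneg_left hq (frobNorm_nonneg B)).trans_eq (mul_comm _ _)))

lemma vnorm_const (r : ℝ) : vnorm (fun _ : Fin d => r) = |r| * Real.sqrt d := by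
  simp [vnorm, Real.sqrt_sq_eq_abs, mul_comm]

lemma sum_add_mul_mul_add_mul_le (a b : Fin d → ℝ) {p r r' : ℝ} (hp : 0 ≤ p)
    (hr : 0 ≤ r) (hr' : 0 ≤ r') :
    ∑ j, (r + p * a j) * (r' + p * b j) ≤
      (r * Real.sqrt d + p * vnorm a) * (r' * Real.sqrt d + p * vnorm b) := by
  have key : ∀ (r : ℝ) (a : Fin d → ℝ), 0 ≤ r →
      vnorm (fun j => r + p * a j) ≤ r * Real.sqrt d + p * vnorm a := fun r a hr => by
    simpa [vnorm_const, vnorm_const_mul, abs_of_nonneg hr, abs_of_nonneg hp] using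
      vnorm_add_le (fun _ => r) (fun j => p * a j)
  exact (le_abs_self _).trans <| (abs_sum_mul_le _ _).trans <|
    mul_le_mul (key r a hr) (key r' b hr') (vnorm_nonneg _)
      (add_nonneg (by positivity) (mul_nonneg hp (vnorm_nonneg a)))

end EuclideanNorm

lemma abs_mul_mul_add_mul_le {s t a b q : ℝ} (hs : |s| ≤ 1) (ht : |t| ≤ 1) :
    |s * a * b + t * q| ≤ |a * b| + |q| := by
  refine (abs_add_le _ _).trans (add_le_add ?_ ?_)
  · rw [mul_assoc, abs_mul]
    exact mul_le_of_le_one_left (abs_nonneg _) hs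
  · rw [abs_mul]
    exact mul_le_of_le_one_left (abs_nonneg _) ht

lemma abs_inv_mul_sum_le {N : ℕ} (hN : 1 ≤ N) {T : Fin N → ℝ} {C : ℝ} (hT : ∀ i, |T i| ≤ C) :
    |(N : ℝ)⁻¹ * ∑ i, T i| ≤ C := by
  have hN' : (0 : ℝ) < N := by exact_mod_cast hN
  calc |(N : ℝ)⁻¹ * ∑ i, T i| ≤ (N : ℝ)⁻¹ * ∑ _i : Fin N, C := by
        rw [abs_mul, abs_of_pos (inv_pos.mpr hN')]
        gcongr
        exact (abs_sum_le_sum_abs _ _).trans (sum_le_sum fun i _ => hT i)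
    _ = C := by
        rw [sum_const, card_univ, Fintype.card_fin, nsmul_eq_mul, inv_mul_cancel_left₀ hN'.ne']

def weightNorm {d L : ℕ} (v : Fin L → Fin d → Fin d → ℝ) : ℝ := vnorm fun k => frobNorm (v k)

lemma weightNorm_eq {d L : ℕ} (v : Fin L → Fin d → Fin d → ℝ) :
    weightNorm v = Real.sqrt (∑ k, ∑ m, ∑ n, v k m n ^ 2) := by
  simp only [weightNorm, vnorm, frobNorm, Real.sq_sqrt (sum_nonneg fun _ _ => sum_nonneg
    fun _ _ => sq_nonneg _)]

lemma weightNorm_nonneg {d L : ℕ} (v : Fin L → Fin d → Fin d → ℝ) : 0 ≤ weightNorm v :=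
  vnorm_nonneg _

lemma discrete_gronwall_fin {L : ℕ} {c : ℝ} (hc : 0 ≤ c) {u : ℕ → ℝ} {b : Fin L → ℝ}
    (hu0 : 0 ≤ u 0) (hb : ∀ j, 0 ≤ b j) (hu : ∀ j : Fin L, u (j + 1) ≤ (1 + c / L) * u j + b j)
    {n : ℕ} (hn : n ≤ L) : u n ≤ (u 0 + ∑ j, b j) * Real.exp c := by
  -- freeze `u` after step `L` so that the recursion holds for every `n`
  set u' : ℕ → ℝ := fun m => u (min m L)
  set c' : ℕ → ℝ := fun m => if m < L then c / L else 0
  set b' : ℕ → ℝ := fun m => if h : m < L then b ⟨m, h⟩ else 0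
  have hc' : ∀ m, 0 ≤ c' m := fun m => by dsimp only [c']; split_ifs <;> positivity
  have hb' : ∀ m, 0 ≤ b' m := fun m => by dsimp only [b']; split_ifs <;> simp [hb]
  have hstep : ∀ m ≥ 0, u' (m + 1) ≤ (1 + c' m) * u' m + b' m := by
    intro m _
    by_cases hm : m < L
    · simpa [u', c', b', hm, Nat.min_eq_left hm.le, Nat.min_eq_left (Nat.succ_le_of_lt hm)]
        using hu ⟨m, hm⟩
    · simp [u', c', b', hm, Nat.min_eq_right (not_lt.mp hm),
        Nat.min_eq_right (Nat.le_succ_of_le (not_lt.mp hm))]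
  have hsum_b : ∑ m ∈ Ico 0 n, b' m ≤ ∑ j, b j := by
    calc ∑ m ∈ Ico 0 n, b' m ≤ ∑ m ∈ range L, b' m := by
          rw [← range_eq_Ico]
          exact sum_le_sum_of_subset_of_nonneg (range_subset_range.mpr hn) fun m _ _ => hb' m
      _ = ∑ j, b j := by rw [← Fin.sum_univ_eq_sum_range]; simp [b']
  have hsum_c : ∑ m ∈ Ico 0 n, c' m ≤ c := by
    calc ∑ m ∈ Ico 0 n, c' m = n * (c / L) := by
          rw [← range_eq_Ico, ← Fin.sum_univ_eq_sum_range]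
          simp [c', show ∀ m : Fin n, (m : ℕ) < L from fun m => m.2.trans_le hn]
      _ ≤ c := by
          rcases Nat.eq_zero_or_pos L with rfl | hL
          · simp [hc]
          · rw [mul_div_assoc', div_le_iff₀ (by exact_mod_cast hL), mul_comm c]
            gcongr
  calc u n = u' n := by simp [u', Nat.min_eq_left hn]
    _ ≤ (u' 0 + ∑ m ∈ Ico 0 n, b' m) * Real.exp (∑ m ∈ Ico 0 n, c' m) :=
        discrete_gronwall (by simpa [u'] using hu0) hstep (fun m _ => hc' m) (fun m _ => hb' m)
          (Nat.zero_le n)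
    _ ≤ (u 0 + ∑ j, b j) * Real.exp c := by
        gcongr
        · exact add_nonneg hu0 (sum_nonneg fun j _ => hb j)
        · simp [u']

lemma inv_sqrt_mul_sqrt_le_one (L : ℕ) : (Real.sqrt L)⁻¹ * Real.sqrt L ≤ 1 :=
  inv_mul_le_one_of_le₀ le_rfl (Real.sqrt_nonneg _)

lemma vnorm_residual_le {d L : ℕ} {S b u : Fin d → ℝ} {c G : ℝ} (hb : ∀ i, |b i| ≤ |u i|)
    (hu : vnorm u ≤ c * (Real.sqrt L)⁻¹ * vnorm S + G) :
    vnorm (fun i => S i + (Real.sqrt L)⁻¹ * b i) ≤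
      (1 + c / L) * vnorm S + (Real.sqrt L)⁻¹ * G := by
  have hs : (Real.sqrt L)⁻¹ * (Real.sqrt L)⁻¹ = (L : ℝ)⁻¹ := by
    rw [← mul_inv, Real.mul_self_sqrt (Nat.cast_nonneg L)]
  calc vnorm (fun i => S i + (Real.sqrt L)⁻¹ * b i)
      ≤ vnorm S + (Real.sqrt L)⁻¹ * vnorm u := by
        refine (vnorm_add_le _ _).trans ?_
        rw [vnorm_const_mul, abs_of_nonneg (by positivity)]
        gcongr
        exact vnorm_le_of_abs_le hb
    _ ≤ vnorm S + (Real.sqrt L)⁻¹ * (c * (Real.sqrt L)⁻¹ * vnorm S + G) := by gcongr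
    _ = (1 + c / L) * vnorm S + (Real.sqrt L)⁻¹ * G := by rw [div_eq_mul_inv, ← hs]; ring

section ResNet

variable {d L : ℕ} (σ : ℝ → ℝ)

/-- `∂_v h_k^x(α)`: the recursion of `hiddenState` differentiated along `v`. -/
def hiddenStateDeriv (α v : Fin L → Fin d → Fin d → ℝ) (x : Fin d → ℝ) : ℕ → Fin d → ℝ
  | 0 => fun _ => 0
  | k + 1 =>
      if h : k < L then
        fun i => hiddenStateDeriv α v x k i + (Real.sqrt L)⁻¹ *
          (deriv σ (mulVec' (α ⟨k, h⟩) (hiddenState σ α x k) i) *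
            (mulVec' (α ⟨k, h⟩) (hiddenStateDeriv α v x k) i
              + mulVec' (v ⟨k, h⟩) (hiddenState σ α x k) i))
      else hiddenStateDeriv α v x k

/-- `∂_w ∂_v h_k^x(α)`. -/
def hiddenStateDeriv2 (α v w : Fin L → Fin d → Fin d → ℝ) (x : Fin d → ℝ) : ℕ → Fin d → ℝ
  | 0 => fun _ => 0
  | k + 1 =>
      if h : k < L then
        fun i => hiddenStateDeriv2 α v w x k i + (Real.sqrt L)⁻¹ *
          (deriv (deriv σ) (mulVec' (α ⟨k, h⟩) (hiddenState σ α x k) i) *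
              (mulVec' (α ⟨k, h⟩) (hiddenStateDeriv σ α w x k) i
                + mulVec' (w ⟨k, h⟩) (hiddenState σ α x k) i) *
              (mulVec' (α ⟨k, h⟩) (hiddenStateDeriv σ α v x k) i
                + mulVec' (v ⟨k, h⟩) (hiddenState σ α x k) i)
            + deriv σ (mulVec' (α ⟨k, h⟩) (hiddenState σ α x k) i) *
              (mulVec' (α ⟨k, h⟩) (hiddenStateDeriv2 α v w x k) i
                + mulVec' (w ⟨k, h⟩) (hiddenStateDeriv σ α v x k) i
                + mulVec' (v ⟨k, h⟩) (hiddenStateDeriv σ α w x k) i))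
      else hiddenStateDeriv2 α v w x k

variable {σ} {α v w : Fin L → Fin d → Fin d → ℝ} {x : Fin d → ℝ} {k : ℕ}

lemma hiddenState_succ (h : k < L) :
    hiddenState σ α x (k + 1) = fun i => hiddenState σ α x k i +
      (Real.sqrt L)⁻¹ * σ (mulVec' (α ⟨k, h⟩) (hiddenState σ α x k) i) := by
  rw [hiddenState, dif_pos h]

lemma hiddenState_succ_of_le (h : L ≤ k) : hiddenState σ α x (k + 1) = hiddenState σ α x k := by
  rw [hiddenState, dif_neg h.not_gt]

lemma hiddenStateDeriv_succ (h : k < L) :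
    hiddenStateDeriv σ α v x (k + 1) = fun i => hiddenStateDeriv σ α v x k i + (Real.sqrt L)⁻¹ *
      (deriv σ (mulVec' (α ⟨k, h⟩) (hiddenState σ α x k) i) *
        (mulVec' (α ⟨k, h⟩) (hiddenStateDeriv σ α v x k) i
          + mulVec' (v ⟨k, h⟩) (hiddenState σ α x k) i)) := by
  rw [hiddenStateDeriv, dif_pos h]

lemma hiddenStateDeriv_succ_of_le (h : L ≤ k) :
    hiddenStateDeriv σ α v x (k + 1) = hiddenStateDeriv σ α v x k := by
  rw [hiddenStateDeriv, dif_neg h.not_gt]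

lemma hiddenStateDeriv2_succ (h : k < L) :
    hiddenStateDeriv2 σ α v w x (k + 1) = fun i => hiddenStateDeriv2 σ α v w x k i +
      (Real.sqrt L)⁻¹ *
        (deriv (deriv σ) (mulVec' (α ⟨k, h⟩) (hiddenState σ α x k) i) *
            (mulVec' (α ⟨k, h⟩) (hiddenStateDeriv σ α w x k) i
              + mulVec' (w ⟨k, h⟩) (hiddenState σ α x k) i) *
            (mulVec' (α ⟨k, h⟩) (hiddenStateDeriv σ α v x k) i
              + mulVec' (v ⟨k, h⟩) (hiddenState σ α x k) i)
          + deriv σ (mulVec' (α ⟨k, h⟩) (hiddenState σ α x k) i) *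
            (mulVec' (α ⟨k, h⟩) (hiddenStateDeriv2 σ α v w x k) i
              + mulVec' (w ⟨k, h⟩) (hiddenStateDeriv σ α v x k) i
              + mulVec' (v ⟨k, h⟩) (hiddenStateDeriv σ α w x k) i)) := by
  rw [hiddenStateDeriv2, dif_pos h]

lemma hiddenStateDeriv2_succ_of_le (h : L ≤ k) :
    hiddenStateDeriv2 σ α v w x (k + 1) = hiddenStateDeriv2 σ α v w x k := by
  rw [hiddenStateDeriv2, dif_neg h.not_gt]

end ResNet

section Derivatives

variable {d L : ℕ}

lemma hasDerivAt_mulVec' {A : ℝ → Fin d → Fin d → ℝ} {A' : Fin d → Fin d → ℝ}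
    {u : ℝ → Fin d → ℝ} {u' : Fin d → ℝ} {t : ℝ}
    (hA : ∀ i j, HasDerivAt (fun t => A t i j) (A' i j) t)
    (hu : ∀ j, HasDerivAt (fun t => u t j) (u' j) t) (i : Fin d) :
    HasDerivAt (fun t => mulVec' (A t) (u t) i) (mulVec' A' (u t) i + mulVec' (A t) u' i) t := by
  have := HasDerivAt.fun_sum fun j (_ : j ∈ univ) => (hA i j).fun_mul (hu j)
  simpa only [mulVec', ← sum_add_distrib] using this

lemma hasDerivAt_line_apply (α w : Fin L → Fin d → Fin d → ℝ) (p : Fin L) (i j : Fin d) :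
    HasDerivAt (fun t : ℝ => (α + t • w) p i j) (w p i j) 0 := by
  simpa using ((hasDerivAt_id (0 : ℝ)).mul_const (w p i j)).const_add (α p i j)

variable {σ : ℝ → ℝ} (α v w : Fin L → Fin d → Fin d → ℝ) (x : Fin d → ℝ)

lemma hasLineDerivAt_hiddenState (hσ : ContDiff ℝ 2 σ) (k : ℕ) (i : Fin d) :
    HasLineDerivAt ℝ (fun β => hiddenState σ β x k i) (hiddenStateDeriv σ α v x k i) α v := by
  have hσ' : ∀ z, HasDerivAt σ (deriv σ z) z :=
    fun z => (hσ.differentiable (by norm_num) z).hasDerivAt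
  unfold HasLineDerivAt
  induction k generalizing i with
  | zero => simpa [hiddenState, hiddenStateDeriv] using hasDerivAt_const (0 : ℝ) (x i)
  | succ k ih =>
    by_cases h : k < L
    · simp only [hiddenState_succ h, hiddenStateDeriv_succ h]
      have hz := hasDerivAt_mulVec' (u := fun t => hiddenState σ (α + t • v) x k)
        (hasDerivAt_line_apply α v ⟨k, h⟩) ih i
      refine ((ih i).fun_add (((hσ' _).comp 0 hz).const_mul (Real.sqrt L)⁻¹)).congr_deriv ?_
      simp only [zero_smul, add_zero]; ring
    · simp only [hiddenState_succ_of_le (not_lt.mp h), hiddenStateDeriv_succ_of_le (not_lt.mp h)]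
      exact ih i

lemma hasLineDerivAt_hiddenStateDeriv (hσ : ContDiff ℝ 2 σ) (k : ℕ) (i : Fin d) :
    HasLineDerivAt ℝ (fun β => hiddenStateDeriv σ β v x k i)
      (hiddenStateDeriv2 σ α v w x k i) α w := by
  have hσ' : ∀ z, HasDerivAt (deriv σ) (deriv (deriv σ) z) z :=
    fun z => ((hσ.deriv' (n := 1)).differentiable (by norm_num) z).hasDerivAt
  unfold HasLineDerivAt
  induction k generalizing i with
  | zero => simpa [hiddenStateDeriv, hiddenStateDeriv2] using hasDerivAt_const (0 : ℝ) (0 : ℝ)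
  | succ k ih =>
    by_cases h : k < L
    · simp only [hiddenStateDeriv_succ h, hiddenStateDeriv2_succ h]
      have hh := hasLineDerivAt_hiddenState α w x hσ k
      have hz := hasDerivAt_mulVec' (u := fun t => hiddenState σ (α + t • w) x k)
        (hasDerivAt_line_apply α w ⟨k, h⟩) hh i
      have hm₁ := hasDerivAt_mulVec' (u := fun t => hiddenStateDeriv σ (α + t • w) v x k)
        (hasDerivAt_line_apply α w ⟨k, h⟩) ih i
      have hm₂ := hasDerivAt_mulVec' (A := fun _ => v ⟨k, h⟩)
        (u := fun t => hiddenState σ (α + t • w) x k) (fun _ _ => hasDerivAt_const _ _) hh i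
      refine ((ih i).fun_add ((((hσ' _).comp 0 hz).fun_mul (hm₁.fun_add hm₂)).const_mul
        (Real.sqrt L)⁻¹)).congr_deriv ?_
      simp only [Function.comp_apply, zero_smul, add_zero, mulVec', zero_mul, sum_const_zero,
        zero_add]
      ring
    · simp only [hiddenStateDeriv_succ_of_le (not_lt.mp h),
        hiddenStateDeriv2_succ_of_le (not_lt.mp h)]
      exact ih i

end Derivatives

section Smoothness

variable {d L N : ℕ} {σ : ℝ → ℝ}

lemma contDiff_hiddenState (hσ : ContDiff ℝ 2 σ) (x : Fin d → ℝ) (k : ℕ) (i : Fin d) :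
    ContDiff ℝ 2 (fun α : Fin L → Fin d → Fin d → ℝ => hiddenState σ α x k i) := by
  induction k generalizing i with
  | zero => simpa [hiddenState] using contDiff_const
  | succ k ih =>
    by_cases h : k < L
    · simp only [hiddenState_succ h, mulVec']
      fun_prop
    · simpa only [hiddenState_succ_of_le (not_lt.mp h)] using ih i

lemma contDiff_loss (hσ : ContDiff ℝ 2 σ) (x y : Fin N → Fin d → ℝ) :
    ContDiff ℝ 2 (loss (L := L) σ x y) := by
  have := contDiff_hiddenState (d := d) (L := L) hσ
  unfold loss
  fun_prop

end Smoothness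

section LossDerivatives

variable {d L N : ℕ} (σ : ℝ → ℝ) (x y : Fin N → Fin d → ℝ) (α v w : Fin L → Fin d → Fin d → ℝ)

def lossLineDeriv : ℝ :=
  (N : ℝ)⁻¹ * ∑ i, ∑ j, (hiddenState σ α (x i) L j - y i j) * hiddenStateDeriv σ α v (x i) L j

def lossHessian : ℝ :=
  (N : ℝ)⁻¹ * ∑ i,
    ((∑ j, hiddenStateDeriv σ α w (x i) L j * hiddenStateDeriv σ α v (x i) L j)
      + ∑ j, (hiddenState σ α (x i) L j - y i j) * hiddenStateDeriv2 σ α v w (x i) L j)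

variable {σ}

lemma hasLineDerivAt_loss (hσ : ContDiff ℝ 2 σ) :
    HasLineDerivAt ℝ (loss σ x y) (lossLineDeriv σ x y α v) α v := by
  have hterm : ∀ i j, HasDerivAt (fun t : ℝ => (y i j - hiddenState σ (α + t • v) (x i) L j) ^ 2)
      (2 * (hiddenState σ α (x i) L j - y i j) * hiddenStateDeriv σ α v (x i) L j) 0 := by
    intro i j
    have h := ((hasLineDerivAt_hiddenState α v (x i) hσ L j).const_sub (y i j)).fun_pow 2
    refine h.congr_deriv ?_
    simp only [zero_smul, add_zero]; ring
  have h := (HasDerivAt.fun_sum fun i (_ : i ∈ univ) =>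
    HasDerivAt.fun_sum fun j (_ : j ∈ univ) => hterm i j).const_mul (1 / (2 * (N : ℝ)))
  refine h.congr_deriv ?_
  simp only [lossLineDeriv, mul_assoc, ← mul_sum]
  ring

lemma hasLineDerivAt_lossLineDeriv (hσ : ContDiff ℝ 2 σ) :
    HasLineDerivAt ℝ (fun β => lossLineDeriv σ x y β v) (lossHessian σ x y α v w) α w := by
  unfold HasLineDerivAt lossLineDeriv
  have hterm : ∀ i j, HasDerivAt (fun t : ℝ => (hiddenState σ (α + t • w) (x i) L j - y i j) *
        hiddenStateDeriv σ (α + t • w) v (x i) L j)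
      (hiddenStateDeriv σ α w (x i) L j * hiddenStateDeriv σ α v (x i) L j
        + (hiddenState σ α (x i) L j - y i j) * hiddenStateDeriv2 σ α v w (x i) L j) 0 := by
    intro i j
    refine (((hasLineDerivAt_hiddenState α w (x i) hσ L j).sub_const (y i j)).fun_mul
      (hasLineDerivAt_hiddenStateDeriv α v w (x i) hσ L j)).congr_deriv ?_
    simp only [zero_smul, add_zero]
  have h := (HasDerivAt.fun_sum fun i (_ : i ∈ univ) =>
    HasDerivAt.fun_sum fun j (_ : j ∈ univ) => hterm i j).const_mul (N : ℝ)⁻¹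
  simpa only [lossHessian, sum_add_distrib] using h

lemma fderiv_fderiv_loss_apply (hσ : ContDiff ℝ 2 σ) :
    fderiv ℝ (fun β => fderiv ℝ (loss σ x y) β v) α w = lossHessian σ x y α v w := by
  have hC1 : ContDiff ℝ 1 (fun β => fderiv ℝ (loss (L := L) σ x y) β v) :=
    ((contDiff_loss hσ x y).fderiv_right (m := 1) le_rfl).clm_apply contDiff_const
  have hfderiv : (fun β => fderiv ℝ (loss σ x y) β v) = fun β => lossLineDeriv σ x y β v := by
    funext β
    rw [← ((contDiff_loss hσ x y).differentiable (by norm_num) β).lineDeriv_eq_fderiv,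
      (hasLineDerivAt_loss x y β v hσ).lineDeriv]
  rw [← (hC1.differentiable one_ne_zero α).lineDeriv_eq_fderiv, hfderiv,
    (hasLineDerivAt_lossLineDeriv x y α v w hσ).lineDeriv]

end LossDerivatives

section Bounds

variable {d L : ℕ} {σ : ℝ → ℝ} {α v w : Fin L → Fin d → Fin d → ℝ} {x : Fin d → ℝ} {c : ℝ}

lemma vnorm_hiddenState_le (hc : 0 ≤ c) (hσ : ∀ z, |σ z| ≤ |z|)
    (hα : ∀ k, frobNorm (α k) ≤ c * (Real.sqrt L)⁻¹) (hx : vnorm x ≤ 1) {k : ℕ} (hk : k ≤ L) :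
    vnorm (hiddenState σ α x k) ≤ Real.exp c := by
  have hstep : ∀ j : Fin L, vnorm (hiddenState σ α x (j + 1)) ≤
      (1 + c / L) * vnorm (hiddenState σ α x j) + (Real.sqrt L)⁻¹ * 0 := by
    intro ⟨j, hj⟩
    rw [hiddenState_succ hj]
    refine vnorm_residual_le (fun i => hσ _) ?_
    rw [add_zero]
    exact (vnorm_mulVec'_le _ _).trans (mul_le_mul_of_nonneg_right (hα _) (vnorm_nonneg _))
  calc vnorm (hiddenState σ α x k)
      ≤ (vnorm x + ∑ _j : Fin L, (Real.sqrt L)⁻¹ * 0) * Real.exp c :=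
        discrete_gronwall_fin (u := fun k => vnorm (hiddenState σ α x k)) hc (vnorm_nonneg x)
          (fun _ => by simp) hstep hk
    _ ≤ Real.exp c := by simpa using mul_le_mul_of_nonneg_right hx (Real.exp_pos c).le

lemma vnorm_hiddenStateDeriv_le (hc : 0 ≤ c) (hσ : ∀ z, |σ z| ≤ |z|) (hσ' : ∀ z, |deriv σ z| ≤ 1)
    (hα : ∀ k, frobNorm (α k) ≤ c * (Real.sqrt L)⁻¹) (hx : vnorm x ≤ 1) {k : ℕ} (hk : k ≤ L) :
    vnorm (hiddenStateDeriv σ α v x k) ≤ Real.exp c ^ 2 * weightNorm v := by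
  have hstep : ∀ j : Fin L, vnorm (hiddenStateDeriv σ α v x (j + 1)) ≤
      (1 + c / L) * vnorm (hiddenStateDeriv σ α v x j)
        + (Real.sqrt L)⁻¹ * (Real.exp c * frobNorm (v j)) := by
    intro ⟨j, hj⟩
    rw [hiddenStateDeriv_succ hj]
    refine vnorm_residual_le (fun i => ?_) (vnorm_mulVec'_add_mulVec'_le (B := v ⟨j, hj⟩)
      (hα ⟨j, hj⟩) le_rfl (vnorm_hiddenState_le hc hσ hα hx hj.le))
    rw [abs_mul]
    exact mul_le_of_le_one_left (abs_nonneg _) (hσ' _)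
  have hb : ∀ j : Fin L, 0 ≤ (Real.sqrt L)⁻¹ * (Real.exp c * frobNorm (v j)) :=
    fun j => mul_nonneg (by positivity) (mul_nonneg (Real.exp_pos c).le (frobNorm_nonneg _))
  calc vnorm (hiddenStateDeriv σ α v x k)
      ≤ (0 + ∑ j, (Real.sqrt L)⁻¹ * (Real.exp c * frobNorm (v j))) * Real.exp c := by
        simpa [hiddenStateDeriv, vnorm] using
          discrete_gronwall_fin (u := fun k => vnorm (hiddenStateDeriv σ α v x k)) hc
            (vnorm_nonneg _) hb hstep hk
    _ = (Real.sqrt L)⁻¹ * (∑ j, frobNorm (v j)) * Real.exp c ^ 2 := by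
        simp only [zero_add, ← mul_sum]; ring
    _ ≤ (Real.sqrt L)⁻¹ * (Real.sqrt L * weightNorm v) * Real.exp c ^ 2 := by
        gcongr
        exact sum_le_sqrt_card_mul_vnorm _
    _ = ((Real.sqrt L)⁻¹ * Real.sqrt L) * (Real.exp c ^ 2 * weightNorm v) := by ring
    _ ≤ Real.exp c ^ 2 * weightNorm v :=
        mul_le_of_le_one_left (mul_nonneg (by positivity) (weightNorm_nonneg v))
          (inv_sqrt_mul_sqrt_le_one L)

lemma vnorm_hiddenStateDeriv2_succ_le (hσ' : ∀ z, |deriv σ z| ≤ 1)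
    (hσ'' : ∀ z, |deriv (deriv σ) z| ≤ 1) (hα : ∀ k, frobNorm (α k) ≤ c * (Real.sqrt L)⁻¹)
    {j : ℕ} (hj : j < L) {E A B : ℝ} (hh : vnorm (hiddenState σ α x j) ≤ E)
    (hA : vnorm (hiddenStateDeriv σ α v x j) ≤ A) (hB : vnorm (hiddenStateDeriv σ α w x j) ≤ B) :
    vnorm (hiddenStateDeriv2 σ α v w x (j + 1)) ≤
      (1 + c / L) * vnorm (hiddenStateDeriv2 σ α v w x j) + (Real.sqrt L)⁻¹ *
        ((c * (Real.sqrt L)⁻¹ * B + E * frobNorm (w ⟨j, hj⟩))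
            * (c * (Real.sqrt L)⁻¹ * A + E * frobNorm (v ⟨j, hj⟩))
          + (A * frobNorm (w ⟨j, hj⟩) + B * frobNorm (v ⟨j, hj⟩))) := by
  set αj := α ⟨j, hj⟩
  set vj := v ⟨j, hj⟩
  set wj := w ⟨j, hj⟩
  set h := hiddenState σ α x j
  set a := fun i => mulVec' αj (hiddenStateDeriv σ α w x j) i + mulVec' wj h i
  set b := fun i => mulVec' αj (hiddenStateDeriv σ α v x j) i + mulVec' vj h i
  set p := hiddenStateDeriv2 σ α v w x j
  set q := fun i => mulVec' αj p i + mulVec' wj (hiddenStateDeriv σ α v x j) i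
    + mulVec' vj (hiddenStateDeriv σ α w x j) i
  have ha : vnorm a ≤ c * (Real.sqrt L)⁻¹ * B + E * frobNorm wj :=
    vnorm_mulVec'_add_mulVec'_le (hα _) hB hh
  have hb : vnorm b ≤ c * (Real.sqrt L)⁻¹ * A + E * frobNorm vj :=
    vnorm_mulVec'_add_mulVec'_le (hα _) hA hh
  have hq : vnorm q ≤ c * (Real.sqrt L)⁻¹ * vnorm p + (A * frobNorm wj + B * frobNorm vj) := by
    have h₁ : vnorm (fun i => mulVec' αj p i + mulVec' wj (hiddenStateDeriv σ α v x j) i)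
        ≤ c * (Real.sqrt L)⁻¹ * vnorm p + A * frobNorm wj :=
      vnorm_mulVec'_add_mulVec'_le (hα _) le_rfl hA
    have h₂ := (vnorm_mulVec'_le vj (hiddenStateDeriv σ α w x j)).trans
      (mul_le_mul_of_nonneg_left hB (frobNorm_nonneg vj))
    linarith [vnorm_add_le (fun i => mulVec' αj p i + mulVec' wj (hiddenStateDeriv σ α v x j) i)
      (mulVec' vj (hiddenStateDeriv σ α w x j))]
  rw [hiddenStateDeriv2_succ hj]
  refine vnorm_residual_le (u := fun i => |a i * b i| + |q i|) (fun i => ?_) ?_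
  · exact (abs_mul_mul_add_mul_le (hσ'' _) (hσ' _)).trans (le_abs_self _)
  · calc vnorm (fun i => |a i * b i| + |q i|)
        ≤ vnorm a * vnorm b + vnorm q := by
          refine (vnorm_add_le _ _).trans ?_
          rw [vnorm_abs (fun i => a i * b i), vnorm_abs]
          gcongr
          exact vnorm_mul_le a b
      _ ≤ (c * (Real.sqrt L)⁻¹ * B + E * frobNorm wj)
            * (c * (Real.sqrt L)⁻¹ * A + E * frobNorm vj)
          + (c * (Real.sqrt L)⁻¹ * vnorm p + (A * frobNorm wj + B * frobNorm vj)) :=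
          add_le_add (mul_le_mul ha hb (vnorm_nonneg _) ((vnorm_nonneg _).trans ha)) hq
      _ = _ := by ring

lemma sum_layer_source_le (hc : 0 ≤ c) {e : ℝ} (he : 0 ≤ e) (v w : Fin L → Fin d → Fin d → ℝ) :
    ∑ j, (Real.sqrt L)⁻¹ *
        ((c * (Real.sqrt L)⁻¹ * (e ^ 2 * weightNorm w) + e * frobNorm (w j))
            * (c * (Real.sqrt L)⁻¹ * (e ^ 2 * weightNorm v) + e * frobNorm (v j))
          + (e ^ 2 * weightNorm v * frobNorm (w j) + e ^ 2 * weightNorm w * frobNorm (v j)))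
      ≤ ((Real.sqrt L)⁻¹ * (e + c * e ^ 2) ^ 2 + 2 * e ^ 2) * (weightNorm v * weightNorm w) := by
  set s := (Real.sqrt L)⁻¹
  set A := e ^ 2 * weightNorm v
  set B := e ^ 2 * weightNorm w
  have hA : 0 ≤ A := mul_nonneg (by positivity) (weightNorm_nonneg v)
  have hB : 0 ≤ B := mul_nonneg (by positivity) (weightNorm_nonneg w)
  have hv₀ := weightNorm_nonneg v
  have hw₀ := weightNorm_nonneg w
  have ht : s * Real.sqrt L ≤ 1 := inv_sqrt_mul_sqrt_le_one L
  have h₁ : ∑ j, (c * s * B + e * frobNorm (w j)) * (c * s * A + e * frobNorm (v j)) ≤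
      (c * s * B * Real.sqrt L + e * weightNorm w) * (c * s * A * Real.sqrt L + e * weightNorm v) :=
    sum_add_mul_mul_add_mul_le _ _ he (by positivity) (by positivity)
  have hw : ∑ j, frobNorm (w j) ≤ Real.sqrt L * weightNorm w := sum_le_sqrt_card_mul_vnorm _
  have hv : ∑ j, frobNorm (v j) ≤ Real.sqrt L * weightNorm v := sum_le_sqrt_card_mul_vnorm _
  calc _ = s * ∑ j, (c * s * B + e * frobNorm (w j)) * (c * s * A + e * frobNorm (v j))
        + s * (A * ∑ j, frobNorm (w j) + B * ∑ j, frobNorm (v j)) := by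
        simp only [← mul_sum, sum_add_distrib, mul_add]
    _ ≤ s * ((c * s * B * Real.sqrt L + e * weightNorm w)
            * (c * s * A * Real.sqrt L + e * weightNorm v))
        + s * (A * (Real.sqrt L * weightNorm w) + B * (Real.sqrt L * weightNorm v)) := by
        gcongr
    _ = s * ((c * B * (s * Real.sqrt L) + e * weightNorm w)
            * (c * A * (s * Real.sqrt L) + e * weightNorm v))
        + (s * Real.sqrt L) * (A * weightNorm w + B * weightNorm v) := by ring
    _ ≤ s * ((c * B * 1 + e * weightNorm w) * (c * A * 1 + e * weightNorm v))
        + 1 * (A * weightNorm w + B * weightNorm v) := by gcongr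
    _ = (s * (e + c * e ^ 2) ^ 2 + 2 * e ^ 2) * (weightNorm v * weightNorm w) := by ring

lemma vnorm_hiddenStateDeriv2_le (hc : 0 ≤ c) (hσ : ∀ z, |σ z| ≤ |z|)
    (hσ' : ∀ z, |deriv σ z| ≤ 1) (hσ'' : ∀ z, |deriv (deriv σ) z| ≤ 1)
    (hα : ∀ k, frobNorm (α k) ≤ c * (Real.sqrt L)⁻¹) (hx : vnorm x ≤ 1) :
    vnorm (hiddenStateDeriv2 σ α v w x L) ≤ Real.exp c *
      ((Real.sqrt L)⁻¹ * (Real.exp c + c * Real.exp c ^ 2) ^ 2 + 2 * Real.exp c ^ 2)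
        * (weightNorm v * weightNorm w) := by
  set e := Real.exp c
  set G : Fin L → ℝ := fun j => (Real.sqrt L)⁻¹ *
    ((c * (Real.sqrt L)⁻¹ * (e ^ 2 * weightNorm w) + e * frobNorm (w j))
        * (c * (Real.sqrt L)⁻¹ * (e ^ 2 * weightNorm v) + e * frobNorm (v j))
      + (e ^ 2 * weightNorm v * frobNorm (w j) + e ^ 2 * weightNorm w * frobNorm (v j)))
  have hstep : ∀ j : Fin L, vnorm (hiddenStateDeriv2 σ α v w x (j + 1)) ≤
      (1 + c / L) * vnorm (hiddenStateDeriv2 σ α v w x j) + G j := fun ⟨j, hj⟩ =>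
    vnorm_hiddenStateDeriv2_succ_le hσ' hσ'' hα hj (vnorm_hiddenState_le hc hσ hα hx hj.le)
      (vnorm_hiddenStateDeriv_le hc hσ hσ' hα hx hj.le)
      (vnorm_hiddenStateDeriv_le hc hσ hσ' hα hx hj.le)
  have hG : ∀ j, 0 ≤ G j := fun j => by
    have := frobNorm_nonneg (v j); have := frobNorm_nonneg (w j)
    have := weightNorm_nonneg v; have := weightNorm_nonneg w
    positivity
  calc vnorm (hiddenStateDeriv2 σ α v w x L)
      ≤ (0 + ∑ j, G j) * e := by
        simpa [hiddenStateDeriv2, vnorm] using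
          discrete_gronwall_fin (u := fun k => vnorm (hiddenStateDeriv2 σ α v w x k)) hc
            (vnorm_nonneg _) hG hstep le_rfl
    _ ≤ e * (((Real.sqrt L)⁻¹ * (e + c * e ^ 2) ^ 2 + 2 * e ^ 2)
          * (weightNorm v * weightNorm w)) := by
        rw [zero_add, mul_comm]
        gcongr
        exact sum_layer_source_le hc (Real.exp_pos c).le v w
    _ = _ := by ring

end Bounds

lemma abs_lossHessian_le {d L N : ℕ} {σ : ℝ → ℝ} {x y : Fin N → Fin d → ℝ}
    {α : Fin L → Fin d → Fin d → ℝ} {c : ℝ} (hN : 1 ≤ N) (hc : 0 ≤ c)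
    (hσ : ∀ z, |σ z| ≤ |z|) (hσ' : ∀ z, |deriv σ z| ≤ 1) (hσ'' : ∀ z, |deriv (deriv σ) z| ≤ 1)
    (hx : ∀ i, vnorm (x i) ≤ 1) (hy : ∀ i, vnorm (y i) ≤ 1)
    (hα : ∀ k, frobNorm (α k) ≤ c * (Real.sqrt L)⁻¹) (v w : Fin L → Fin d → Fin d → ℝ) :
    |lossHessian σ x y α v w| ≤ (Real.exp c ^ 4 + (Real.exp c + 1) * (Real.exp c *
      ((Real.sqrt L)⁻¹ * (Real.exp c + c * Real.exp c ^ 2) ^ 2 + 2 * Real.exp c ^ 2)))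
        * (weightNorm v * weightNorm w) := by
  refine abs_inv_mul_sum_le hN fun i => ?_
  have hres : vnorm (fun j => hiddenState σ α (x i) L j - y i j) ≤ Real.exp c + 1 :=
    (vnorm_sub_le _ _).trans (add_le_add (vnorm_hiddenState_le hc hσ hα (hx i) le_rfl) (hy i))
  have hv := vnorm_hiddenStateDeriv_le (v := v) hc hσ hσ' hα (hx i) le_rfl
  have hw := vnorm_hiddenStateDeriv_le (v := w) hc hσ hσ' hα (hx i) le_rfl
  have hp := vnorm_hiddenStateDeriv2_le (v := v) (w := w) hc hσ hσ' hσ'' hα (hx i)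
  calc _ ≤ _ := (abs_add_le _ _).trans (add_le_add (abs_sum_mul_le _ _) (abs_sum_mul_le _ _))
    _ ≤ Real.exp c ^ 2 * weightNorm w * (Real.exp c ^ 2 * weightNorm v) + (Real.exp c + 1) *
        (Real.exp c * ((Real.sqrt L)⁻¹ * (Real.exp c + c * Real.exp c ^ 2) ^ 2
          + 2 * Real.exp c ^ 2) * (weightNorm v * weightNorm w)) :=
        add_le_add (mul_le_mul hw hv (vnorm_nonneg _) ((vnorm_nonneg _).trans hw))
          (mul_le_mul hres hp (vnorm_nonneg _) ((vnorm_nonneg _).trans hres))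
    _ = _ := by ring

/-- **Upper bound on the Hessian of the loss (Lemma C.2).** The Hessian, as a symmetric
bilinear form on the weight space, is bounded by `5 d e^{4.3 cα}` with respect to the
Euclidean norm on the weights, for all sufficiently large `L` (depending only on `cα`
and `d`). -/
theorem statement4 {d : ℕ} (hd : 1 ≤ d) (cα : ℝ) (hcα : 0 < cα) :
    ∃ L₀ : ℕ, ∀ N : ℕ, 1 ≤ N → ∀ σ : ℝ → ℝ, ActAssump σ →
      ∀ x y : Fin N → Fin d → ℝ,
        (∀ i, vnorm (x i) = 1) → (∀ i, vnorm (y i) = 1) →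
      ∀ L : ℕ, L₀ ≤ L →
      ∀ α : Fin L → Fin d → Fin d → ℝ,
        (∀ k, frobNorm (α k) ≤ cα * (Real.sqrt L)⁻¹) →
      ∀ v w : Fin L → Fin d → Fin d → ℝ,
        |fderiv ℝ (fun a => fderiv ℝ (loss σ x y) a v) α w|
          ≤ 5 * d * Real.exp (4.3 * cα)
            * Real.sqrt (∑ k, ∑ m, ∑ n, v k m n ^ 2)
            * Real.sqrt (∑ k, ∑ m, ∑ n, w k m n ^ 2) := by
  have he : 1 ≤ Real.exp cα := Real.one_le_exp hcα.le
  have he4 : Real.exp cα ^ 4 < Real.exp (4.3 * cα) := by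
    rw [← Real.exp_nat_mul]; exact Real.exp_lt_exp.mpr (by push_cast; linarith)
  -- the `O(L^{-1/2})` part of the bound fits into the gap between `5 e^{4 cα}` and `5 e^{4.3 cα}`
  have hgap : (Real.exp cα + 1) * Real.exp cα * (Real.exp cα + cα * Real.exp cα ^ 2) ^ 2 * 0 <
      5 * (Real.exp (4.3 * cα) - Real.exp cα ^ 4) := by
    rw [mul_zero]; linarith
  obtain ⟨L₀, hL₀⟩ := Filter.eventually_atTop.mp <| Filter.Tendsto.eventually_le_const hgap <|
    (tendsto_inv_atTop_zero.comp
      (Real.tendsto_sqrt_atTop.comp tendsto_natCast_atTop_atTop)).const_mul _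
  refine ⟨L₀, fun N hN σ hσ x y hx hy L hL α hα v w => ?_⟩
  obtain ⟨hσC2, -, hσ⟩ := hσ
  have hsmall := hL₀ L hL
  simp only [Function.comp_apply] at hsmall
  rw [fderiv_fderiv_loss_apply x y α v w hσC2, ← weightNorm_eq, ← weightNorm_eq,
    mul_assoc _ (weightNorm v)]
  refine (abs_lossHessian_le hN hcα.le (fun z => (hσ z).1) (fun z => (hσ z).2.1)
    (fun z => (hσ z).2.2) (fun i => (hx i).le) (fun i => (hy i).le) hα v w).trans ?_
  have hd' : (1 : ℝ) ≤ d := by exact_mod_cast hd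
  gcongr
  · exact mul_nonneg (weightNorm_nonneg v) (weightNorm_nonneg w)
  nlinarith [pow_le_pow_right₀ he (show 3 ≤ 4 by norm_num), Real.exp_pos (4.3 * cα)]
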